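/- Let F be a field of characteristic 2 and let α, β, γ, δ, b ∈ F with β ≠ 0, δ ≠ 0, and 1 + b²β ≠ 0. Then there is an F-algebra isomorphism [α, β) ⊗_F [γ, δ) ≅ [α + b²βγ/(1 + b²β), β) ⊗_F [γ, δ·(1 + b²β)). -/

import Mathlib

open scoped TensorProduct

/-- The relations defining the characteristic two quaternion symbol algebra `[α, β)`:
`x² + x = α`, `y² = β`, `xy + yx = y`. -/
inductive QuatSymbolRel (F : Type*) [CommRing F] (α β : F) :
    FreeAlgebra F (Fin 2) → FreeAlgebra F (Fin 2) → Prop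
  | x_rel : QuatSymbolRel F α β
      (FreeAlgebra.ι F (0 : Fin 2) * FreeAlgebra.ι F (0 : Fin 2) + FreeAlgebra.ι F (0 : Fin 2))
      (algebraMap F (FreeAlgebra F (Fin 2)) α)
  | y_rel : QuatSymbolRel F α β
      (FreeAlgebra.ι F (1 : Fin 2) * FreeAlgebra.ι F (1 : Fin 2))
      (algebraMap F (FreeAlgebra F (Fin 2)) β)
  | xy_rel : QuatSymbolRel F α β
      (FreeAlgebra.ι F (0 : Fin 2) * FreeAlgebra.ι F (1 : Fin 2) +
        FreeAlgebra.ι F (1 : Fin 2) * FreeAlgebra.ι F (0 : Fin 2))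
      (FreeAlgebra.ι F (1 : Fin 2))

/-- The characteristic two quaternion symbol algebra `[α, β)` over `F`: the `F`-algebra
generated by `x, y` subject to `x² + x = α`, `y² = β`, `xy + yx = y`. -/
def QuatSymbol (F : Type*) [CommRing F] (α β : F) :=
  RingQuot (QuatSymbolRel F α β)

noncomputable instance (F : Type*) [CommRing F] (α β : F) : Ring (QuatSymbol F α β) :=
  inferInstanceAs (Ring (RingQuot (QuatSymbolRel F α β)))

noncomputable instance (F : Type*) [CommRing F] (α β : F) : Algebra F (QuatSymbol F α β) :=
  inferInstanceAs (Algebra F (RingQuot (QuatSymbolRel F α β)))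

/-!
Write `x, y` and `u, v` for the standard generators of the two factors of
`[α, β) ⊗ [γ, δ)` and put `D = 1 + b²β`. In characteristic two `(1 + by)² = D` and
`(y + bβ)(1 + by) = D y`, and these identities show that
`x' = x + (b/D)(y + bβ)u` and `y` satisfy the relations of `[α + b²βγ/D, β)`, that `u` and
`v' = (1 + by)v` satisfy those of `[γ, δD)`, and that the two new pairs commute. Hence there is
an algebra map from the right-hand side to the left-hand side. The same substitution, with `v'`
scaled by `D⁻¹`, gives a map back; on generators the two composites are `x ↦ x + 2(…) = x` and
`v ↦ D⁻¹(1 + by)²v = v`.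
-/

namespace QuatSymbol

variable {F B : Type*} [CommRing F] [Ring B] [Algebra F B] {α β γ δ : F}

noncomputable def mk : FreeAlgebra F (Fin 2) →ₐ[F] QuatSymbol F α β :=
  RingQuot.mkAlgHom F (QuatSymbolRel F α β)

noncomputable def x : QuatSymbol F α β := mk (FreeAlgebra.ι F 0)

noncomputable def y : QuatSymbol F α β := mk (FreeAlgebra.ι F 1)

theorem mk_eq_mk_of_rel {p q : FreeAlgebra F (Fin 2)} (h : QuatSymbolRel F α β p q) :
    (mk p : QuatSymbol F α β) = mk q :=
  RingQuot.mkAlgHom_rel F h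

/-- `a, c` satisfy the defining relations of the generators `x, y` of `[α, β)`. -/
structure IsPair (α β : F) (a c : B) : Prop where
  x_rel : a * a + a = α • 1
  y_rel : c * c = β • 1
  xy_rel : a * c + c * a = c

theorem IsPair.map {C : Type*} [Ring C] [Algebra F C] {a c : B} (h : IsPair α β a c)
    (f : B →ₐ[F] C) : IsPair α β (f a) (f c) where
  x_rel := by rw [← map_mul, ← map_add, h.x_rel, map_smul, map_one]
  y_rel := by rw [← map_mul, h.y_rel, map_smul, map_one]
  xy_rel := by rw [← map_mul, ← map_mul, ← map_add, h.xy_rel]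

theorem isPair_x_y : IsPair α β (x : QuatSymbol F α β) y where
  x_rel := by
    simpa [x, Algebra.algebraMap_eq_smul_one] using mk_eq_mk_of_rel (QuatSymbolRel.x_rel (β := β))
  y_rel := by
    simpa [y, Algebra.algebraMap_eq_smul_one] using mk_eq_mk_of_rel (QuatSymbolRel.y_rel (α := α))
  xy_rel := by simpa [x, y] using mk_eq_mk_of_rel (QuatSymbolRel.xy_rel (α := α) (β := β))

noncomputable def lift {a c : B} (h : IsPair α β a c) : QuatSymbol F α β →ₐ[F] B :=
  RingQuot.liftAlgHom F ⟨FreeAlgebra.lift F ![a, c], fun _ _ r => by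
    cases r <;> simp [h.x_rel, h.y_rel, h.xy_rel, Algebra.algebraMap_eq_smul_one]⟩

theorem lift_mk {a c : B} (h : IsPair α β a c) (p : FreeAlgebra F (Fin 2)) :
    lift h (mk p) = FreeAlgebra.lift F ![a, c] p :=
  RingQuot.liftAlgHom_mkAlgHom_apply _ _ _ _

@[simp] theorem lift_x {a c : B} (h : IsPair α β a c) : lift h x = a := by
  simp [x, lift_mk]

@[simp] theorem lift_y {a c : B} (h : IsPair α β a c) : lift h y = c := by
  simp [y, lift_mk]

theorem algHom_ext {f g : QuatSymbol F α β →ₐ[F] B} (hx : f x = g x) (hy : f y = g y) :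
    f = g :=
  RingQuot.ringQuot_ext' _ _ _ <| FreeAlgebra.hom_ext <| funext <| Fin.forall_fin_two.2 ⟨hx, hy⟩

theorem adjoin_x_y : Algebra.adjoin F {x, y} = (⊤ : Subalgebra F (QuatSymbol F α β)) := by
  have hxy : ({x, y} : Set (QuatSymbol F α β)) = mk '' Set.range (FreeAlgebra.ι F) := by
    simp [Fin.range_fin_succ, Set.image_insert_eq, Fin.tail, x, y]
  rw [hxy, Algebra.adjoin_image, FreeAlgebra.adjoin_range_ι, Algebra.map_top,
    AlgHom.range_eq_top]
  exact RingQuot.mkAlgHom_surjective F _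

theorem commute_of_commute_x_y (f : QuatSymbol F α β →ₐ[F] B) {z : B} (hx : Commute (f x) z)
    (hy : Commute (f y) z) (q : QuatSymbol F α β) : Commute (f q) z := by
  have hq : f q ∈ Algebra.adjoin F {f x, f y} := by
    rw [← Set.image_pair, Algebra.adjoin_image, adjoin_x_y, Algebra.map_top]
    exact AlgHom.mem_range_self f q
  refine (Algebra.commute_of_mem_adjoin_of_forall_mem_commute hq ?_).symm
  simpa using ⟨hx.symm, hy.symm⟩

structure IsCommutingPairs (α β γ δ : F) (x y u v : B) : Prop where
  left : IsPair α β x y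
  right : IsPair γ δ u v
  commute_xu : Commute x u
  commute_xv : Commute x v
  commute_yu : Commute y u
  commute_yv : Commute y v

theorem isCommutingPairs_tmul :
    IsCommutingPairs α β γ δ ((x : QuatSymbol F α β) ⊗ₜ[F] (1 : QuatSymbol F γ δ)) (y ⊗ₜ 1)
      (1 ⊗ₜ x) (1 ⊗ₜ y) where
  left := isPair_x_y.map Algebra.TensorProduct.includeLeft
  right := isPair_x_y.map (Algebra.TensorProduct.includeRight (A := QuatSymbol F α β))
  commute_xu := (Commute.one_right _).tmul (Commute.one_left _)
  commute_xv := (Commute.one_right _).tmul (Commute.one_left _)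
  commute_yu := (Commute.one_right _).tmul (Commute.one_left _)
  commute_yv := (Commute.one_right _).tmul (Commute.one_left _)

theorem commute_lift_lift {x y u v : B} (h : IsCommutingPairs α β γ δ x y u v)
    (p : QuatSymbol F α β) (q : QuatSymbol F γ δ) : Commute (lift h.left p) (lift h.right q) := by
  have hu : ∀ p, Commute (lift h.left p) u :=
    commute_of_commute_x_y _ (by simpa using h.commute_xu) (by simpa using h.commute_yu)
  have hv : ∀ p, Commute (lift h.left p) v :=
    commute_of_commute_x_y _ (by simpa using h.commute_xv) (by simpa using h.commute_yv)
  exact (commute_of_commute_x_y _ (by simpa using (hu p).symm)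
    (by simpa using (hv p).symm) q).symm

noncomputable def liftTensor {x y u v : B} (h : IsCommutingPairs α β γ δ x y u v) :
    QuatSymbol F α β ⊗[F] QuatSymbol F γ δ →ₐ[F] B :=
  Algebra.TensorProduct.lift (lift h.left) (lift h.right) (commute_lift_lift h)

section liftTensor

variable {x y u v : B} (h : IsCommutingPairs α β γ δ x y u v)

@[simp] theorem liftTensor_x_tmul_one : liftTensor h (QuatSymbol.x ⊗ₜ 1) = x := by
  simp [liftTensor]

@[simp] theorem liftTensor_y_tmul_one : liftTensor h (QuatSymbol.y ⊗ₜ 1) = y := by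
  simp [liftTensor]

@[simp] theorem liftTensor_one_tmul_x : liftTensor h (1 ⊗ₜ QuatSymbol.x) = u := by
  simp [liftTensor]

@[simp] theorem liftTensor_one_tmul_y : liftTensor h (1 ⊗ₜ QuatSymbol.y) = v := by
  simp [liftTensor]

end liftTensor

theorem tensor_algHom_ext {f g : QuatSymbol F α β ⊗[F] QuatSymbol F γ δ →ₐ[F] B}
    (hx : f (x ⊗ₜ 1) = g (x ⊗ₜ 1)) (hy : f (y ⊗ₜ 1) = g (y ⊗ₜ 1))
    (hu : f (1 ⊗ₜ x) = g (1 ⊗ₜ x)) (hv : f (1 ⊗ₜ y) = g (1 ⊗ₜ y)) : f = g :=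
  Algebra.TensorProduct.ext (algHom_ext hx hy) (algHom_ext hu hv)

end QuatSymbol

open QuatSymbol

section CharTwo

variable (F : Type*) [Semiring F] [CharP F 2] {B : Type*} [Ring B]

theorem add_self_eq_zero_of_charP_two {M : Type*} [AddCommMonoid M] [Module F M] (t : M) :
    t + t = 0 := by
  rw [← two_smul F t, CharTwo.two_eq_zero, zero_smul]

theorem commute_iff_mul_add_mul_eq_zero [Module F B] {a c : B} :
    Commute a c ↔ a * c + c * a = 0 := by
  rw [Commute, SemiconjBy, ← add_self_eq_zero_of_charP_two F (c * a), add_left_inj]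

theorem add_mul_self_of_commute [Module F B] {a c : B} (hac : Commute a c) :
    (a + c) * (a + c) = a * a + c * c := by
  calc (a + c) * (a + c) = a * a + c * c + (a * c + c * a) := by noncomm_ring
    _ = a * a + c * c := by rw [(commute_iff_mul_add_mul_eq_zero F).1 hac, add_zero]

end CharTwo

theorem one_add_smul_mul_self {F B : Type*} [CommRing F] [CharP F 2] [Ring B] [Algebra F B]
    {β b : F} {y : B} (hy : y * y = β • 1) : (1 + b • y) * (1 + b • y) = (1 + b ^ 2 * β) • 1 := by
  rw [add_mul_self_of_commute F ((Commute.one_left y).smul_right b), one_mul,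
    smul_mul_smul_comm, hy, smul_smul, add_smul, one_smul, sq]

namespace QuatSymbol.IsPair

variable {F B : Type*} [CommRing F] [Ring B] [Algebra F B] {α β : F} {x y : B}

theorem mul_self_left [CharP F 2] (h : IsPair α β x y) : x * x = x + α • 1 := by
  rw [← h.x_rel, add_comm, add_assoc, add_self_eq_zero_of_charP_two F, add_zero]

theorem add_left [CharP F 2] (h : IsPair α β x y) {z : B} {τ : F} (hzy : Commute z y)
    (hz : x * z + z * x + z * z + z = τ • 1) : IsPair (α + τ) β (x + z) y where
  x_rel := by
    rw [add_smul, ← h.x_rel, ← hz]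
    noncomm_ring
  y_rel := h.y_rel
  xy_rel := by
    rw [add_mul, mul_add, add_add_add_comm, h.xy_rel,
      (commute_iff_mul_add_mul_eq_zero F).1 hzy, add_zero]

theorem mul_left {w : B} {ε : F} (h : IsPair α β x y) (hw : w * w = ε • 1) (hwx : Commute w x)
    (hwy : Commute w y) : IsPair α (β * ε) x (w * y) where
  x_rel := h.x_rel
  y_rel := by
    rw [hwy.symm.mul_mul_mul_comm, hw, h.y_rel, smul_mul_smul_comm, one_mul, mul_comm]
  xy_rel := by
    rw [← mul_assoc, ← hwx.eq, mul_assoc, mul_assoc, ← mul_add, h.xy_rel]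

end QuatSymbol.IsPair

section OmegaC

variable {F B : Type*} [Field F] [Ring B] [Algebra F B]

noncomputable def omegaX (b β : F) (x y u : B) : B :=
  x + (b / (1 + b ^ 2 * β)) • ((y + (b * β) • 1) * u)

def omegaV (b e : F) (y v : B) : B := e • ((1 + b • y) * v)

theorem AlgHom.map_omegaX {C : Type*} [Ring C] [Algebra F C] (f : B →ₐ[F] C) (b β : F)
    (x y u : B) : f (omegaX b β x y u) = omegaX b β (f x) (f y) (f u) := by
  simp [omegaX]

theorem AlgHom.map_omegaV {C : Type*} [Ring C] [Algebra F C] (f : B →ₐ[F] C) (b e : F)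
    (y v : B) : f (omegaV b e y v) = omegaV b e (f y) (f v) := by
  simp [omegaV]

variable [CharP F 2]

namespace QuatSymbol.IsCommutingPairs

variable {α β γ δ b : F} {x y u v : B}

theorem isPair_omegaX (h : IsCommutingPairs α β γ δ x y u v) (hb : 1 + b ^ 2 * β ≠ 0) :
    IsPair (α + b ^ 2 * β * γ / (1 + b ^ 2 * β)) β (omegaX b β x y u) y := by
  have h2 : (2 : F) = 0 := CharTwo.two_eq_zero
  have hc : b / (1 + b ^ 2 * β) * (1 + b ^ 2 * β) = b := div_mul_cancel₀ b hb
  set s := y + (b * β) • (1 : B)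
  have hsy : Commute s y := (Commute.refl y).add_left ((Commute.one_left y).smul_left _)
  have hsu : Commute s u := h.commute_yu.add_left ((Commute.one_left u).smul_left _)
  have hss : s * s = (β * (1 + b ^ 2 * β)) • 1 := by
    rw [add_mul_self_of_commute F ((Commute.one_right y).smul_right _), h.left.y_rel,
      smul_mul_smul_comm, one_mul, ← add_smul]
    ring_nf
  have hxs : x * s + s * x = y := by
    simp only [s, mul_add, add_mul, mul_smul_comm, smul_mul_assoc, mul_one, one_mul]
    rw [add_add_add_comm, h.left.xy_rel, ← smul_add, add_self_eq_zero_of_charP_two F, smul_zero,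
      add_zero]
  refine h.left.add_left ((hsy.mul_left h.commute_yu.symm).smul_left _) ?_
  have hxz : x * (b / (1 + b ^ 2 * β)) • (s * u) + (b / (1 + b ^ 2 * β)) • (s * u) * x =
      (b / (1 + b ^ 2 * β)) • (y * u) := by
    rw [mul_smul_comm, smul_mul_assoc, ← smul_add, ← mul_assoc, mul_assoc s, ← h.commute_xu.eq,
      ← mul_assoc, ← add_mul, hxs]
  rw [hxz, smul_mul_smul_comm, hsu.symm.mul_mul_mul_comm, hss, h.right.mul_self_left]
  simp only [add_mul, smul_add, smul_mul_assoc, one_mul, smul_smul]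
  match_scalars
  · linear_combination (b / (1 + b ^ 2 * β)) * h2
  · linear_combination (b / (1 + b ^ 2 * β) * β) * hc + (b / (1 + b ^ 2 * β) * b * β) * h2
  · linear_combination (b / (1 + b ^ 2 * β) * β * γ) * hc

theorem isPair_omegaV (h : IsCommutingPairs α β γ δ x y u v) (e : F) :
    IsPair γ (δ * (e ^ 2 * (1 + b ^ 2 * β))) u (omegaV b e y v) := by
  rw [omegaV, ← smul_mul_assoc]
  refine h.right.mul_left ?_
    (((Commute.one_left u).add_left (h.commute_yu.smul_left b)).smul_left e)
    (((Commute.one_left v).add_left (h.commute_yv.smul_left b)).smul_left e)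
  rw [smul_mul_smul_comm, one_add_smul_mul_self h.left.y_rel, smul_smul, ← sq]

theorem commute_omegaX_omegaV (h : IsCommutingPairs α β γ δ x y u v) (hb : 1 + b ^ 2 * β ≠ 0)
    (e : F) : Commute (omegaX b β x y u) (omegaV b e y v) := by
  rw [omegaX, omegaV]
  refine Commute.smul_right ?_ e
  set s := y + (b * β) • (1 : B)
  set t := 1 + b • y
  have hst : s * t = (1 + b ^ 2 * β) • y := by
    simp only [s, t, mul_add, add_mul, mul_one, one_mul, mul_smul_comm, smul_mul_assoc,
      h.left.y_rel]
    match_scalars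
    · ring
    · linear_combination (b * β) * (CharTwo.two_eq_zero : (2 : F) = 0)
  have hxt : x * t + t * x = b • y := by
    simp only [t, mul_add, add_mul, mul_one, one_mul, mul_smul_comm, smul_mul_assoc]
    rw [add_add_add_comm, add_self_eq_zero_of_charP_two F, zero_add, ← smul_add, h.left.xy_rel]
  have hsv : Commute s v := h.commute_yv.add_left ((Commute.one_left v).smul_left _)
  have htu : Commute t u := (Commute.one_left u).add_left (h.commute_yu.smul_left _)
  have hts : Commute t s := (Commute.one_left s).add_left
    (((Commute.refl y).add_right ((Commute.one_right y).smul_right _)).smul_left b)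
  have hxtv : x * (t * v) + t * v * x = b • (y * v) := by
    rw [← mul_assoc, mul_assoc t, ← h.commute_xv.eq, ← mul_assoc, ← add_mul, hxt, smul_mul_assoc]
  have hztv : s * u * (t * v) + t * v * (s * u) = (1 + b ^ 2 * β) • (y * v) := by
    rw [htu.symm.mul_mul_mul_comm, hsv.symm.mul_mul_mul_comm, hts.eq, ← mul_add, h.right.xy_rel,
      hst, smul_mul_assoc]
  rw [commute_iff_mul_add_mul_eq_zero F, add_mul, mul_add, add_add_add_comm, hxtv,
    smul_mul_assoc, mul_smul_comm, ← smul_add, hztv, smul_smul, div_mul_cancel₀ b hb,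
    add_self_eq_zero_of_charP_two F]

theorem omegaC (h : IsCommutingPairs α β γ δ x y u v) (hb : 1 + b ^ 2 * β ≠ 0) (e : F) :
    IsCommutingPairs (α + b ^ 2 * β * γ / (1 + b ^ 2 * β)) β γ (δ * (e ^ 2 * (1 + b ^ 2 * β)))
      (omegaX b β x y u) y u (omegaV b e y v) where
  left := h.isPair_omegaX hb
  right := h.isPair_omegaV e
  commute_xu := h.commute_xu.add_left
    (((h.commute_yu.add_left ((Commute.one_left u).smul_left _)).mul_left (.refl u)).smul_left _)
  commute_xv := h.commute_omegaX_omegaV hb e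
  commute_yu := h.commute_yu
  commute_yv := (((Commute.one_right y).add_right ((Commute.refl y).smul_right b)).mul_right
    h.commute_yv).smul_right e

end QuatSymbol.IsCommutingPairs

theorem omegaX_omegaX (b β : F) (x y u : B) : omegaX b β (omegaX b β x y u) y u = x := by
  rw [omegaX, omegaX, add_assoc, add_self_eq_zero_of_charP_two F, add_zero]

theorem omegaV_omegaV {β : F} {y : B} (hy : y * y = β • 1) (b e e' : F) (v : B) :
    omegaV b e y (omegaV b e' y v) = (e * e' * (1 + b ^ 2 * β)) • v := by
  rw [omegaV, omegaV, mul_smul_comm, ← mul_assoc, one_add_smul_mul_self hy, smul_mul_assoc,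
    one_mul, smul_smul, smul_smul, mul_assoc]

theorem liftTensor_comp_liftTensor {α β γ δ α' δ' b e e' : F}
    (h : IsCommutingPairs α' β γ δ'
      (omegaX b β ((x : QuatSymbol F α β) ⊗ₜ[F] (1 : QuatSymbol F γ δ)) (y ⊗ₜ 1) (1 ⊗ₜ x))
      (y ⊗ₜ 1) (1 ⊗ₜ x) (omegaV b e (y ⊗ₜ 1) (1 ⊗ₜ y)))
    (h' : IsCommutingPairs α β γ δ
      (omegaX b β ((x : QuatSymbol F α' β) ⊗ₜ[F] (1 : QuatSymbol F γ δ')) (y ⊗ₜ 1) (1 ⊗ₜ x))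
      (y ⊗ₜ 1) (1 ⊗ₜ x) (omegaV b e' (y ⊗ₜ 1) (1 ⊗ₜ y)))
    (he : e * e' * (1 + b ^ 2 * β) = 1) :
    (liftTensor h').comp (liftTensor h) = AlgHom.id F _ := by
  have hy := (isCommutingPairs_tmul (α := α') (β := β) (γ := γ) (δ := δ')).left.y_rel
  apply tensor_algHom_ext <;>
    simp [AlgHom.map_omegaX, AlgHom.map_omegaV, omegaX_omegaX, omegaV_omegaV hy, he]

end OmegaC

theorem quatSymbol_tensor_omegaC_general (F : Type*) [Field F] [CharP F 2] (α β γ δ b : F)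
    (hb : 1 + b ^ 2 * β ≠ 0) :
    Nonempty ((QuatSymbol F α β ⊗[F] QuatSymbol F γ δ) ≃ₐ[F]
      (QuatSymbol F (α + b ^ 2 * β * γ / (1 + b ^ 2 * β)) β ⊗[F]
        QuatSymbol F γ (δ * (1 + b ^ 2 * β)))) := by
  have h := (isCommutingPairs_tmul (α := α) (β := β) (γ := γ) (δ := δ)).omegaC hb 1
  rw [one_pow, one_mul] at h
  have h' := (isCommutingPairs_tmul (α := α + b ^ 2 * β * γ / (1 + b ^ 2 * β)) (β := β)
    (γ := γ) (δ := δ * (1 + b ^ 2 * β))).omegaC hb (1 + b ^ 2 * β)⁻¹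
  rw [add_assoc, CharTwo.add_self_eq_zero, add_zero,
    show δ * (1 + b ^ 2 * β) * ((1 + b ^ 2 * β)⁻¹ ^ 2 * (1 + b ^ 2 * β)) = δ by field_simp] at h'
  exact ⟨AlgEquiv.ofAlgHom (liftTensor h') (liftTensor h)
    (liftTensor_comp_liftTensor h h' (by field_simp))
    (liftTensor_comp_liftTensor h' h (by field_simp))⟩

/-- The `Ω_c` step on symbol presentations: with `1 + b²β ≠ 0`,
`[α,β) ⊗ [γ,δ) ≅ [α + b²βγ/(1+b²β), β) ⊗ [γ, δ(1+b²β))`. -/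
theorem quatSymbol_tensor_omegaC (F : Type*) [Field F] [CharP F 2] (α β γ δ b : F)
    (hβ : β ≠ 0) (hδ : δ ≠ 0) (hb : 1 + b ^ 2 * β ≠ 0) :
    Nonempty ((QuatSymbol F α β ⊗[F] QuatSymbol F γ δ) ≃ₐ[F]
      (QuatSymbol F (α + b ^ 2 * β * γ / (1 + b ^ 2 * β)) β ⊗[F]
        QuatSymbol F γ (δ * (1 + b ^ 2 * β)))) :=
  quatSymbol_tensor_omegaC_general F α β γ δ b hb
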